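/- arXiv:2601.22682 — 2 statements merged into one kernel-verified Lean document; each statement's English description precedes it below -/
import Mathlib

section
/- Let G : ℝ^{d_x} × ℝ^{d_y} → ℝ be L₂-smooth with L₂ > 0, and let γ ∈ (0, 1/(2L₂)). Then there exists a constant L_θ > 0 such that for all (x,y), (x′,y′) ∈ ℝ^{d_x} × ℝ^{d_y}: ‖θ*_γ(x,y) − θ*_γ(x′,y′)‖ ≤ L_θ ‖(x,y) − (x′,y′)‖, i.e., the proximal solution map θ*_γ is Lipschitz continuous. -/
open scoped RealInnerProductSpace

noncomputable section

/-- `Euc d` is the Euclidean space `ℝ^d`. -/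
abbrev Euc (d : ℕ) : Type := EuclideanSpace ℝ (Fin d)

/-- Gradient of `h` with respect to the first block of variables. -/
noncomputable def gradx {dx dy : ℕ} (h : Euc dx → Euc dy → ℝ) (x : Euc dx) (y : Euc dy) :
    Euc dx :=
  gradient (fun x' => h x' y) x

/-- Gradient of `h` with respect to the second block of variables. -/
noncomputable def grady {dx dy : ℕ} (h : Euc dx → Euc dy → ℝ) (x : Euc dx) (y : Euc dy) :
    Euc dy :=
  gradient (fun y' => h x y') y

/-- The ℓ²-norm of a pair of vectors (the norm on the product `ℝ^{d_x} × ℝ^{d_y}`). -/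
noncomputable def pnorm {dx dy : ℕ} (a : Euc dx) (b : Euc dy) : ℝ :=
  Real.sqrt (‖a‖ ^ 2 + ‖b‖ ^ 2)

/-- `h : ℝ^{d_x} × ℝ^{d_y} → ℝ` is `L`-smooth: it is differentiable and its gradient is
`L`-Lipschitz with respect to the ℓ² product norm. -/
def LSmooth {dx dy : ℕ} (L : ℝ) (h : Euc dx → Euc dy → ℝ) : Prop :=
  (∀ y, Differentiable ℝ fun x => h x y) ∧ (∀ x, Differentiable ℝ fun y => h x y) ∧
    ∀ x y x' y',
      pnorm (gradx h x y - gradx h x' y') (grady h x y - grady h x' y') ≤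
        L * pnorm (x - x') (y - y')

/-- The Moreau envelope `V_γ` of `G`. -/
noncomputable def moreau {dx dy : ℕ} (G : Euc dx → Euc dy → ℝ) (γ : ℝ)
    (x : Euc dx) (y : Euc dy) : ℝ :=
  ⨅ θ : Euc dy, (G x θ + ‖θ - y‖ ^ 2 / (2 * γ))

lemma norm_le_pnorm_left {dx dy : ℕ} (a : Euc dx) (b : Euc dy) : ‖a‖ ≤ pnorm a b := by
  rw [pnorm, ← Real.sqrt_sq (norm_nonneg a)]
  apply Real.sqrt_le_sqrt
  nlinarith [sq_nonneg ‖b‖, Real.sq_sqrt (sq_nonneg ‖a‖)]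

lemma norm_le_pnorm_right {dx dy : ℕ} (a : Euc dx) (b : Euc dy) : ‖b‖ ≤ pnorm a b := by
  rw [pnorm, ← Real.sqrt_sq (norm_nonneg b)]
  apply Real.sqrt_le_sqrt
  nlinarith [sq_nonneg ‖a‖, Real.sq_sqrt (sq_nonneg ‖b‖)]

lemma pnorm_zero_left {dx dy : ℕ} (b : Euc dy) : pnorm (0 : Euc dx) b = ‖b‖ := by
  simp [pnorm, Real.sqrt_sq (norm_nonneg b)]

lemma pnorm_zero_right {dx dy : ℕ} (a : Euc dx) : pnorm a (0 : Euc dy) = ‖a‖ := by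
  simp [pnorm, Real.sqrt_sq (norm_nonneg a)]

lemma pnorm_nonneg {dx dy : ℕ} (a : Euc dx) (b : Euc dy) : 0 ≤ pnorm a b :=
  Real.sqrt_nonneg _

-- first order condition
lemma foc {dx dy : ℕ} (γ : ℝ) (hγ0 : 0 < γ) (G : Euc dx → Euc dy → ℝ)
    (hdiff : ∀ x, Differentiable ℝ fun y => G x y)
    (θs : Euc dx → Euc dy → Euc dy)
    (hθs : ∀ x y θ, θ ≠ θs x y →
      G x (θs x y) + ‖θs x y - y‖ ^ 2 / (2 * γ) < G x θ + ‖θ - y‖ ^ 2 / (2 * γ))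
    (x : Euc dx) (y : Euc dy) :
    grady G x (θs x y) = -(γ⁻¹ • (θs x y - y)) := by
  set θ₀ := θs x y
  have hf : HasFDerivAt (fun θ => G x θ)
      ((InnerProductSpace.toDual ℝ (Euc dy)) (grady G x θ₀)) θ₀ :=
    ((hdiff x θ₀).hasGradientAt).hasFDerivAt
  have hsub : HasFDerivAt (fun θ : Euc dy => θ - y) (ContinuousLinearMap.id ℝ (Euc dy)) θ₀ :=
    (hasFDerivAt_id θ₀).sub_const y
  have hq : HasFDerivAt (fun θ : Euc dy => ‖θ - y‖ ^ 2 / (2 * γ))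
      ((2 * γ)⁻¹ • (2 • ((innerSL ℝ (θ₀ - y)).comp (ContinuousLinearMap.id ℝ (Euc dy))))) θ₀ := by
    simpa [div_eq_inv_mul] using hsub.norm_sq.const_mul (2 * γ)⁻¹
  have hφ := hf.add hq
  have hmin : IsLocalMin (fun θ => G x θ + ‖θ - y‖ ^ 2 / (2 * γ)) θ₀ := by
    apply IsMinOn.isLocalMin (s := Set.univ) _ (by simp)
    intro θ _
    rcases eq_or_ne θ θ₀ with h | h
    · simp [h]
    · exact (hθs x y θ h).le
  have hz := hmin.fderiv_eq_zero
  have hD : fderiv ℝ (fun θ => G x θ + ‖θ - y‖ ^ 2 / (2 * γ)) θ₀ = _ := hφ.fderiv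
  rw [hz] at hD
  have key : ∀ v : Euc dy, ⟪grady G x θ₀ + γ⁻¹ • (θ₀ - y), v⟫ = 0 := by
    intro v
    have := congrArg (fun (L : Euc dy →L[ℝ] ℝ) => L v) hD.symm
    simp only [ContinuousLinearMap.add_apply, ContinuousLinearMap.smul_apply,
      ContinuousLinearMap.coe_smul', Pi.smul_apply, ContinuousLinearMap.comp_apply,
      ContinuousLinearMap.id_apply, ContinuousLinearMap.zero_apply,
      InnerProductSpace.toDual_apply_apply, innerSL_apply_apply] at this
    rw [inner_add_left, real_inner_smul_left]
    have h2 : (2 * γ)⁻¹ * ((2 : ℕ) • ⟪θ₀ - y, v⟫) = γ⁻¹ * ⟪θ₀ - y, v⟫ := by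
      simp only [nsmul_eq_mul, Nat.cast_ofNat, mul_inv]
      ring
    rw [← h2]
    simpa using this
  have := key (grady G x θ₀ + γ⁻¹ • (θ₀ - y))
  have h0 : grady G x θ₀ + γ⁻¹ • (θ₀ - y) = 0 := by
    exact inner_self_eq_zero.mp this
  linear_combination (norm := module) h0

theorem prox_map_lipschitz' {dx dy : ℕ} (L₂ γ : ℝ) (hL₂ : 0 < L₂)
    (G : Euc dx → Euc dy → ℝ)
    (hG : (∀ y, Differentiable ℝ fun x => G x y) ∧ (∀ x, Differentiable ℝ fun y => G x y) ∧
      ∀ x y x' y', pnorm (gradx G x y - gradx G x' y') (grady G x y - grady G x' y') ≤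
        L₂ * pnorm (x - x') (y - y'))
    (hγ0 : 0 < γ) (hγ : γ < 1 / (2 * L₂))
    (θs : Euc dx → Euc dy → Euc dy)
    (hθs : ∀ x y θ, θ ≠ θs x y →
      G x (θs x y) + ‖θs x y - y‖ ^ 2 / (2 * γ) < G x θ + ‖θ - y‖ ^ 2 / (2 * γ)) :
    ∃ Lθ > 0, ∀ (x x' : Euc dx) (y y' : Euc dy),
      ‖θs x y - θs x' y'‖ ≤ Lθ * pnorm (x - x') (y - y') := by
  have hγinv : 2 * L₂ < γ⁻¹ := by
    have h : γ * (2 * L₂) < 1 := by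
      rw [lt_div_iff₀ (by positivity)] at hγ; linarith
    have hinv : γ * γ⁻¹ = 1 := mul_inv_cancel₀ hγ0.ne'
    exact lt_of_mul_lt_mul_left (by linarith) hγ0.le
  have hμ : 0 < γ⁻¹ - L₂ := by linarith
  refine ⟨(γ⁻¹ + L₂) / (γ⁻¹ - L₂), by positivity, ?_⟩
  intro x x' y y'
  set θ₁ := θs x y
  set θ₂ := θs x' y'
  set Δ := θ₁ - θ₂ with hΔ
  set P := pnorm (x - x') (y - y') with hP
  have hPnn : 0 ≤ P := pnorm_nonneg _ _
  rcases eq_or_ne Δ 0 with h0 | h0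
  · rw [h0, norm_zero]; positivity
  have h1 : grady G x θ₁ = -(γ⁻¹ • (θ₁ - y)) := foc γ hγ0 G hG.2.1 θs hθs x y
  have h2 : grady G x' θ₂ = -(γ⁻¹ • (θ₂ - y')) := foc γ hγ0 G hG.2.1 θs hθs x' y'
  -- Lipschitz bounds
  have lipa : ‖grady G x θ₁ - grady G x θ₂‖ ≤ L₂ * ‖Δ‖ := by
    have := hG.2.2 x θ₁ x θ₂
    rw [sub_self, pnorm_zero_left] at this
    exact le_trans (norm_le_pnorm_right _ _) this
  have lipb : ‖grady G x θ₂ - grady G x' θ₂‖ ≤ L₂ * ‖x - x'‖ := by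
    have := hG.2.2 x θ₂ x' θ₂
    rw [sub_self, pnorm_zero_right] at this
    exact le_trans (norm_le_pnorm_right _ _) this
  -- inner products
  have key : ⟪grady G x θ₁ - grady G x' θ₂, Δ⟫ = -γ⁻¹ * ‖Δ‖ ^ 2 + γ⁻¹ * ⟪y - y', Δ⟫ := by
    rw [h1, h2]
    have : -(γ⁻¹ • (θ₁ - y)) - -(γ⁻¹ • (θ₂ - y')) = -(γ⁻¹ • Δ) + γ⁻¹ • (y - y') := by
      rw [hΔ]; module
    rw [this, inner_add_left, inner_neg_left, real_inner_smul_left, real_inner_smul_left,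
      real_inner_self_eq_norm_sq]
    ring
  have split : ⟪grady G x θ₁ - grady G x' θ₂, Δ⟫ ≥ -(L₂ * ‖Δ‖ * ‖Δ‖) - L₂ * ‖x - x'‖ * ‖Δ‖ := by
    have hsplit : grady G x θ₁ - grady G x' θ₂ =
        (grady G x θ₁ - grady G x θ₂) + (grady G x θ₂ - grady G x' θ₂) := by abel
    rw [hsplit, inner_add_left]
    have c1 : |⟪grady G x θ₁ - grady G x θ₂, Δ⟫| ≤ L₂ * ‖Δ‖ * ‖Δ‖ :=
      (abs_real_inner_le_norm _ _).trans (by nlinarith [norm_nonneg Δ])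
    have c2 : |⟪grady G x θ₂ - grady G x' θ₂, Δ⟫| ≤ L₂ * ‖x - x'‖ * ‖Δ‖ :=
      (abs_real_inner_le_norm _ _).trans (by nlinarith [norm_nonneg Δ])
    have := neg_abs_le ⟪grady G x θ₁ - grady G x θ₂, Δ⟫
    have := neg_abs_le ⟪grady G x θ₂ - grady G x' θ₂, Δ⟫
    linarith
  have hyy : ⟪y - y', Δ⟫ ≤ ‖y - y'‖ * ‖Δ‖ := real_inner_le_norm _ _
  have hxP : ‖x - x'‖ ≤ P := norm_le_pnorm_left _ _
  have hyP : ‖y - y'‖ ≤ P := norm_le_pnorm_right _ _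
  have hΔpos : 0 < ‖Δ‖ := norm_pos_iff.mpr h0
  have main : (γ⁻¹ - L₂) * ‖Δ‖ * ‖Δ‖ ≤ (γ⁻¹ + L₂) * P * ‖Δ‖ := by
    have hγipos : (0:ℝ) < γ⁻¹ := by positivity
    have e1 : γ⁻¹ * ⟪y - y', Δ⟫ ≤ γ⁻¹ * (‖y - y'‖ * ‖Δ‖) :=
      mul_le_mul_of_nonneg_left hyy hγipos.le
    have e2 : ‖y - y'‖ * ‖Δ‖ ≤ P * ‖Δ‖ := mul_le_mul_of_nonneg_right hyP (norm_nonneg Δ)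
    have e3 : L₂ * (‖x - x'‖ * ‖Δ‖) ≤ L₂ * (P * ‖Δ‖) :=
      mul_le_mul_of_nonneg_left (mul_le_mul_of_nonneg_right hxP (norm_nonneg Δ)) hL₂.le
    have e4 : γ⁻¹ * (‖y - y'‖ * ‖Δ‖) ≤ γ⁻¹ * (P * ‖Δ‖) :=
      mul_le_mul_of_nonneg_left e2 hγipos.le
    have hsq : ‖Δ‖ ^ 2 = ‖Δ‖ * ‖Δ‖ := sq ‖Δ‖
    rw [hsq] at key
    nlinarith [key, split, e1, e3, e4]
  rw [div_mul_eq_mul_div, le_div_iff₀ hμ]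
  calc ‖Δ‖ * (γ⁻¹ - L₂) = (γ⁻¹ - L₂) * ‖Δ‖ := by ring
    _ ≤ (γ⁻¹ + L₂) * P := by
        have := (mul_le_mul_iff_of_pos_right hΔpos).mp main
        linarith

/-- for `L₂`-smooth `G` and `γ ∈ (0, 1/(2L₂))`, the proximal solution map
`θ*_γ` (given here as the map `θs`, characterized as the unique minimizer by `hθs`) is
Lipschitz continuous: there is `L_θ > 0` with
`‖θ*_γ(x,y) − θ*_γ(x′,y′)‖ ≤ L_θ‖(x,y) − (x′,y′)‖`. -/
theorem prox_map_lipschitz {dx dy : ℕ} (L₂ γ : ℝ) (hL₂ : 0 < L₂)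
    (G : Euc dx → Euc dy → ℝ) (hG : LSmooth L₂ G)
    (hγ0 : 0 < γ) (hγ : γ < 1 / (2 * L₂))
    (θs : Euc dx → Euc dy → Euc dy)
    (hθs : ∀ x y θ, θ ≠ θs x y →
      G x (θs x y) + ‖θs x y - y‖ ^ 2 / (2 * γ) < G x θ + ‖θ - y‖ ^ 2 / (2 * γ)) :
    ∃ Lθ > 0, ∀ (x x' : Euc dx) (y y' : Euc dy),
      ‖θs x y - θs x' y'‖ ≤ Lθ * pnorm (x - x') (y - y') :=
  prox_map_lipschitz' L₂ γ hL₂ G hG hγ0 hγ θs hθs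
end
end

section
/- Let g_i : ℝ^{d_x} × ℝ^{d_y} → ℝ (i = 1,…,n) be L₂-smooth with L₂ > 0, let G := (1/n)∑_{i=1}^n g_i, and let γ ∈ (0, 1/(2L₂)). Then for any families (x_i)_{i=1}^n in ℝ^{d_x} and (y_i)_{i=1}^n, (θ_i)_{i=1}^n in ℝ^{d_y} with averages x̄, ȳ, θ̄: ‖ (1/n) ∑_{i=1}^n ( ∇_y g_i(x_i,θ_i) + (θ_i − y_i)/γ ) ‖² ≤ 6L₂² Δ_x + (6/γ²) Δ_y + 6(L₂² + 1/γ²) Δ_θ + 4(L₂² + 1/γ²) ‖θ*_γ(x̄,ȳ) − θ̄‖². -/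
open scoped RealInnerProductSpace

noncomputable section

/-- The average `(1/n) ∑ᵢ vᵢ` of a family of vectors. -/
noncomputable def avg {n : ℕ} {V : Type} [AddCommGroup V] [Module ℝ V] (v : Fin n → V) : V :=
  (n : ℝ)⁻¹ • ∑ i, v i

/-- The mean squared deviation `(1/n) ∑ᵢ ‖vᵢ − v̄‖²` of a family of vectors. -/
noncomputable def devSq {n d : ℕ} (v : Fin n → Euc d) : ℝ :=
  (n : ℝ)⁻¹ * ∑ i, ‖v i - avg v‖ ^ 2

/- ### Auxiliary lemmas -/

lemma hga_add' {d : ℕ} {f h : Euc d → ℝ} {a b x : Euc d}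
    (hf : HasGradientAt f a x) (hh : HasGradientAt h b x) :
    HasGradientAt (fun θ => f θ + h θ) (a + b) x := by
  rw [hasGradientAt_iff_hasFDerivAt] at *
  simpa [map_add] using hf.fun_add hh

lemma hga_sum' {d n : ℕ} {f : Fin n → Euc d → ℝ} {a : Fin n → Euc d} {x : Euc d}
    (hf : ∀ i, HasGradientAt (f i) (a i) x) :
    HasGradientAt (fun θ => ∑ i, f i θ) (∑ i, a i) x := by
  rw [hasGradientAt_iff_hasFDerivAt]
  simpa [map_sum] using HasFDerivAt.fun_sum (fun i (_ : i ∈ Finset.univ) => hf i)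

lemma hga_const_mul' {d : ℕ} {f : Euc d → ℝ} {a x : Euc d} (c : ℝ)
    (hf : HasGradientAt f a x) :
    HasGradientAt (fun θ => c * f θ) (c • a) x := by
  rw [hasGradientAt_iff_hasFDerivAt] at *
  have h := hf.const_mul c
  convert h using 1
  · rfl
  ext v
  simp [InnerProductSpace.toDual_apply_apply, real_inner_smul_left]

lemma hga_quad' {d : ℕ} (γ : ℝ) (hγ : γ ≠ 0) (c x : Euc d) :
    HasGradientAt (fun θ => ‖θ - c‖ ^ 2 / (2 * γ)) (γ⁻¹ • (x - c)) x := by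
  rw [hasGradientAt_iff_hasFDerivAt]
  have h1 : HasFDerivAt (fun θ : Euc d => θ - c) (ContinuousLinearMap.id ℝ (Euc d)) x :=
    (hasFDerivAt_id x).sub_const c
  have h2 := (h1.inner ℝ h1).const_mul ((2 * γ)⁻¹)
  have hfun : (fun θ : Euc d => ‖θ - c‖ ^ 2 / (2 * γ)) =
      fun θ => (2 * γ)⁻¹ * ⟪θ - c, θ - c⟫ := by
    funext θ; rw [real_inner_self_eq_norm_sq]; ring
  rw [hfun]
  convert h2 using 1
  · rfl
  ext v
  simp only [InnerProductSpace.toDual_apply_apply, ContinuousLinearMap.coe_smul',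
    Pi.smul_apply, ContinuousLinearMap.coe_comp', Function.comp_apply,
    ContinuousLinearMap.prod_apply, ContinuousLinearMap.id_apply,
    fderivInnerCLM_apply, smul_eq_mul, real_inner_smul_left]
  rw [real_inner_comm v (x - c)]
  field_simp
  ring

lemma avg_norm_sq_le {d n : ℕ} (hn : 0 < n) (v : Fin n → Euc d) :
    ‖(n : ℝ)⁻¹ • ∑ i, v i‖ ^ 2 ≤ (n : ℝ)⁻¹ * ∑ i, ‖v i‖ ^ 2 := by
  have hn' : (0 : ℝ) < n := Nat.cast_pos.mpr hn
  have h1 : ‖(n : ℝ)⁻¹ • ∑ i, v i‖ = (n : ℝ)⁻¹ * ‖∑ i, v i‖ := by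
    rw [norm_smul, Real.norm_eq_abs, abs_of_nonneg (by positivity)]
  have h2 : ‖∑ i, v i‖ ≤ ∑ i, ‖v i‖ := norm_sum_le _ _
  have h3 : (∑ i, ‖v i‖) ^ 2 ≤ (n : ℝ) * ∑ i, ‖v i‖ ^ 2 := by
    have := sq_sum_le_card_mul_sum_sq (s := (Finset.univ : Finset (Fin n))) (f := fun i => ‖v i‖)
    simpa using this
  have h4 : ‖∑ i, v i‖ ^ 2 ≤ (∑ i, ‖v i‖) ^ 2 := by
    apply pow_le_pow_left₀ (norm_nonneg _) h2
  rw [h1, mul_pow]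
  calc (n : ℝ)⁻¹ ^ 2 * ‖∑ i, v i‖ ^ 2 ≤ (n : ℝ)⁻¹ ^ 2 * ((n : ℝ) * ∑ i, ‖v i‖ ^ 2) := by
        apply mul_le_mul_of_nonneg_left (h4.trans h3) (by positivity)
    _ = (n : ℝ)⁻¹ * ∑ i, ‖v i‖ ^ 2 := by field_simp

lemma grady_lip {dx dy : ℕ} {L : ℝ} (hL : 0 ≤ L) {h : Euc dx → Euc dy → ℝ}
    (hh : LSmooth L h) (x x' : Euc dx) (y y' : Euc dy) :
    ‖grady h x y - grady h x' y'‖ ^ 2 ≤ L ^ 2 * (‖x - x'‖ ^ 2 + ‖y - y'‖ ^ 2) := by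
  have key := hh.2.2 x y x' y'
  have hp : pnorm (gradx h x y - gradx h x' y') (grady h x y - grady h x' y') ^ 2 =
      ‖gradx h x y - gradx h x' y'‖ ^ 2 + ‖grady h x y - grady h x' y'‖ ^ 2 :=
    Real.sq_sqrt (by positivity)
  have hq : pnorm (x - x') (y - y') ^ 2 = ‖x - x'‖ ^ 2 + ‖y - y'‖ ^ 2 :=
    Real.sq_sqrt (by positivity)
  have hsq : pnorm (gradx h x y - gradx h x' y') (grady h x y - grady h x' y') ^ 2 ≤
      (L * pnorm (x - x') (y - y')) ^ 2 := by
    apply pow_le_pow_left₀ (Real.sqrt_nonneg _) key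
  rw [hp, mul_pow, hq] at hsq
  nlinarith [sq_nonneg ‖gradx h x y - gradx h x' y'‖]

lemma devSq_nonneg' {n d : ℕ} (v : Fin n → Euc d) : 0 ≤ devSq v := by
  unfold devSq
  positivity

lemma norm_add3_sq_le {d : ℕ} (a b c : Euc d) :
    ‖a + b + c‖ ^ 2 ≤ 3 * (‖a‖ ^ 2 + ‖b‖ ^ 2 + ‖c‖ ^ 2) := by
  have h1 : ‖a + b + c‖ ≤ ‖a‖ + ‖b‖ + ‖c‖ :=
    (norm_add_le _ _).trans (add_le_add_left (norm_add_le a b) _)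
  nlinarith [norm_nonneg (a + b + c), norm_nonneg a, norm_nonneg b, norm_nonneg c,
    sq_nonneg (‖a‖ - ‖b‖), sq_nonneg (‖a‖ - ‖c‖), sq_nonneg (‖b‖ - ‖c‖)]

set_option maxHeartbeats 1600000 in
/-- bound on the norm of the averaged `θ`-direction.  Here `G = (1/n)∑ gᵢ`,
`θs` is the proximal solution map of `G` (the unique minimizer characterized by `hθs`),
`x̄, ȳ, θ̄` are the agent averages and `Δ_x, Δ_y, Δ_θ` the consensus errors. -/
theorem averaged_theta_direction_bound {dx dy n : ℕ} (hn : 0 < n) (L₂ γ : ℝ)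
    (hL₂ : 0 < L₂) (hγ0 : 0 < γ) (hγ : γ < 1 / (2 * L₂))
    (g : Fin n → Euc dx → Euc dy → ℝ)
    (hg : ∀ i, LSmooth L₂ (g i))
    (G : Euc dx → Euc dy → ℝ)
    (hG : G = fun a b => (n : ℝ)⁻¹ * ∑ i, g i a b)
    (θs : Euc dx → Euc dy → Euc dy)
    (hθs : ∀ x y θ, θ ≠ θs x y →
      G x (θs x y) + ‖θs x y - y‖ ^ 2 / (2 * γ) < G x θ + ‖θ - y‖ ^ 2 / (2 * γ))
    (xv : Fin n → Euc dx) (yv θv : Fin n → Euc dy) :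
    ‖(n : ℝ)⁻¹ • ∑ i, (grady (g i) (xv i) (θv i) + γ⁻¹ • (θv i - yv i))‖ ^ 2 ≤
      6 * L₂ ^ 2 * devSq xv + 6 / γ ^ 2 * devSq yv +
        6 * (L₂ ^ 2 + 1 / γ ^ 2) * devSq θv +
        4 * (L₂ ^ 2 + 1 / γ ^ 2) * ‖θs (avg xv) (avg yv) - avg θv‖ ^ 2 := by
  have hn' : (0 : ℝ) < n := Nat.cast_pos.mpr hn
  set xb := avg xv with hxbar
  set yb := avg yv with hybar
  set tb := avg θv with hθbar
  set t := θs xb yb with ht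
  -- gradient of G in y
  have hGgrad : ∀ x y, HasGradientAt (fun θ => G x θ)
      ((n : ℝ)⁻¹ • ∑ i, grady (g i) x y) y := by
    intro x y
    rw [hG]
    exact hga_const_mul' _ (hga_sum' fun i =>
      ((hg i).2.1 x y).hasGradientAt)
  -- first-order condition at the minimizer
  have hfoc : (n : ℝ)⁻¹ • ∑ i, grady (g i) xb t + γ⁻¹ • (t - yb) = 0 := by
    have hmin : IsLocalMin (fun θ => G xb θ + ‖θ - yb‖ ^ 2 / (2 * γ)) t := by
      apply Filter.Eventually.of_forall
      intro θ
      by_cases hcase : θ = t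
      · rw [hcase]
      · exact (hθs xb yb θ hcase).le
    have hφ : HasGradientAt (fun θ => G xb θ + ‖θ - yb‖ ^ 2 / (2 * γ))
        ((n : ℝ)⁻¹ • ∑ i, grady (g i) xb t + γ⁻¹ • (t - yb)) t :=
      hga_add' (hGgrad xb t) (hga_quad' γ hγ0.ne' yb t)
    have h0 : fderiv ℝ (fun θ => G xb θ + ‖θ - yb‖ ^ 2 / (2 * γ)) t = 0 :=
      hmin.fderiv_eq_zero
    rw [hasGradientAt_iff_hasFDerivAt] at hφ
    have := hφ.fderiv
    rw [h0] at this
    have := congrArg (InnerProductSpace.toDual ℝ (Euc dy)).symm this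
    simpa using this.symm
  -- decomposition of the averaged direction
  set a : Euc dy := (n : ℝ)⁻¹ • ∑ i, (grady (g i) (xv i) (θv i) - grady (g i) xb tb) with ha
  set b : Euc dy := (n : ℝ)⁻¹ • ∑ i, (grady (g i) xb tb - grady (g i) xb t) with hb
  set c : Euc dy := γ⁻¹ • (tb - t) with hc
  have hdecomp : (n : ℝ)⁻¹ • ∑ i, (grady (g i) (xv i) (θv i) + γ⁻¹ • (θv i - yv i))
      = a + b + c := by
    have hsum : ∑ i, (grady (g i) (xv i) (θv i) + γ⁻¹ • (θv i - yv i)) =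
        (∑ i, (grady (g i) (xv i) (θv i) - grady (g i) xb tb)) +
        (∑ i, (grady (g i) xb tb - grady (g i) xb t)) +
        (∑ i, grady (g i) xb t) + γ⁻¹ • ((∑ i, θv i) - (∑ i, yv i)) := by
      rw [Finset.sum_add_distrib, Finset.sum_sub_distrib, Finset.sum_sub_distrib,
        smul_sub]
      rw [show ∑ i, γ⁻¹ • (θv i - yv i) = γ⁻¹ • ∑ i, (θv i - yv i) from
        (Finset.smul_sum).symm, Finset.sum_sub_distrib, smul_sub]
      abel
    rw [hsum]
    have h2 : (n : ℝ)⁻¹ • ∑ i, grady (g i) xb t = -(γ⁻¹ • (t - yb)) :=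
      eq_neg_of_add_eq_zero_left hfoc
    have h3 : tb - yb = (n : ℝ)⁻¹ • ((∑ i, θv i) - (∑ i, yv i)) := by
      rw [hθbar, hybar, avg, avg, smul_sub]
    rw [smul_add, smul_add, smul_add, h2, smul_comm, ← h3, ha, hb, hc]
    module
  rw [hdecomp]
  -- bound on the three pieces
  have hT : ‖t - tb‖ ^ 2 = ‖tb - t‖ ^ 2 := by rw [norm_sub_rev]
  have hA : ‖a‖ ^ 2 ≤ L₂ ^ 2 * (devSq xv + devSq θv) := by
    rw [ha]
    refine (avg_norm_sq_le hn _).trans ?_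
    calc (n : ℝ)⁻¹ * ∑ i, ‖grady (g i) (xv i) (θv i) - grady (g i) xb tb‖ ^ 2
        ≤ (n : ℝ)⁻¹ * ∑ i, L₂ ^ 2 * (‖xv i - xb‖ ^ 2 + ‖θv i - tb‖ ^ 2) := by
          apply mul_le_mul_of_nonneg_left _ (by positivity)
          exact Finset.sum_le_sum fun i _ => grady_lip hL₂.le (hg i) (xv i) xb (θv i) tb
      _ = L₂ ^ 2 * (devSq xv + devSq θv) := by
          rw [devSq, devSq, ← hxbar, ← hθbar, ← Finset.mul_sum, Finset.sum_add_distrib]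
          ring
  have hB : ‖b‖ ^ 2 ≤ L₂ ^ 2 * ‖tb - t‖ ^ 2 := by
    rw [hb]
    refine (avg_norm_sq_le hn _).trans ?_
    have hbd : ∀ i : Fin n, ‖grady (g i) xb tb - grady (g i) xb t‖ ^ 2 ≤
        L₂ ^ 2 * ‖tb - t‖ ^ 2 := by
      intro i
      have := grady_lip hL₂.le (hg i) xb xb tb t
      simpa using this
    calc (n : ℝ)⁻¹ * ∑ i, ‖grady (g i) xb tb - grady (g i) xb t‖ ^ 2
        ≤ (n : ℝ)⁻¹ * ∑ _i : Fin n, L₂ ^ 2 * ‖tb - t‖ ^ 2 := by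
          apply mul_le_mul_of_nonneg_left (Finset.sum_le_sum fun i _ => hbd i) (by positivity)
      _ = L₂ ^ 2 * ‖tb - t‖ ^ 2 := by
          rw [Finset.sum_const, Finset.card_univ, Fintype.card_fin, nsmul_eq_mul]
          field_simp
  have hC : ‖c‖ ^ 2 = 1 / γ ^ 2 * ‖tb - t‖ ^ 2 := by
    rw [hc, norm_smul, Real.norm_eq_abs, abs_of_nonneg (by positivity), mul_pow]
    field_simp
  have htri : ‖a + b + c‖ ^ 2 ≤ 3 * (‖a‖ ^ 2 + ‖b‖ ^ 2 + ‖c‖ ^ 2) :=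
    norm_add3_sq_le a b c
  clear_value a b c t tb xb yb
  have hdx : 0 ≤ devSq xv := devSq_nonneg' xv
  have hdy : 0 ≤ devSq yv := devSq_nonneg' yv
  have hdθ : 0 ≤ devSq θv := devSq_nonneg' θv
  have hTnn : (0 : ℝ) ≤ ‖tb - t‖ ^ 2 := sq_nonneg _
  have hγ2 : (0:ℝ) ≤ 1 / γ ^ 2 := by positivity
  calc ‖a + b + c‖ ^ 2 ≤ 3 * (‖a‖ ^ 2 + ‖b‖ ^ 2 + ‖c‖ ^ 2) := htri
    _ ≤ 6 * L₂ ^ 2 * devSq xv + 6 / γ ^ 2 * devSq yv +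
        6 * (L₂ ^ 2 + 1 / γ ^ 2) * devSq θv +
        4 * (L₂ ^ 2 + 1 / γ ^ 2) * ‖t - tb‖ ^ 2 := by
      rw [hT, hC, show (6:ℝ)/γ^2 = 6*(1/γ^2) by ring]
      nlinarith [hA, hB, mul_nonneg (sq_nonneg L₂) hdx, mul_nonneg hγ2 hdy,
        mul_nonneg (sq_nonneg L₂) hdθ, mul_nonneg hγ2 hdθ,
        mul_nonneg (sq_nonneg L₂) hTnn, mul_nonneg hγ2 hTnn]
end
end
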